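/- arXiv:1609.06287 — 2 statements merged into one kernel-verified Lean document; each statement's English description precedes it below -/
import Mathlib

section
/- Let λ* be a minimizer of the dual function λ ↦ Σ_{i=1}^n q_i(λ), let x* be an optimal solution of the resource allocation problem, and let C > 0 satisfy |x − b_i| ≤ C for all x ∈ X_i and all i. Then for every iteration k ≥ 0 of the DLM algorithm, 0 ≤ Σ_{i=1}^n [L_i(x_i*, v_i(k+1)) − L_i(x_i(k+1), v_i(k+1))] ≤ C Σ_{i=1}^n |λ* − v_i(k+1)| + Σ_{i=1}^n v_i(k+1)(x_i* − b_i), where L_i(x, v) = f_i(x) + v(x − b_i) is the local Lagrangian at node i. -/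
/-- The dual component function `q_i(λ) = f_i*(−λ) + λ b_i`, where `f_i*` is the
Fenchel conjugate of `f_i` over the set `X_i`: `f_i*(u) = sup_{x ∈ X_i} (u x − f_i x)`. -/
noncomputable def qfun (f : ℝ → ℝ) (X : Set ℝ) (b : ℝ) (lam : ℝ) : ℝ :=
  sSup ((fun x => (-lam) * x - f x) '' X) + lam * b

lemma qfun_lipschitz_le (f : ℝ → ℝ) (hfc : Continuous f) (X : Set ℝ)
    (hne : X.Nonempty) (hcpt : IsCompact X) (b C : ℝ)
    (hCb : ∀ z ∈ X, |z - b| ≤ C) (l m : ℝ) :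
    qfun f X b l ≤ qfun f X b m + C * |l - m| := by
  have hcont : Continuous (fun z => (-l) * z - f z) :=
    (continuous_const.mul continuous_id).sub hfc
  obtain ⟨x0, hx0, hmax⟩ := hcpt.exists_isMaxOn hne hcont.continuousOn
  have hsup : sSup ((fun z => (-l) * z - f z) '' X) = (-l) * x0 - f x0 := by
    apply IsGreatest.csSup_eq
    constructor
    · exact Set.mem_image_of_mem _ hx0
    · rintro y ⟨z, hz, rfl⟩; exact hmax hz
  have hbdd : BddAbove ((fun z => (-m) * z - f z) '' X) :=
    (hcpt.image ((continuous_const.mul continuous_id).sub hfc)).bddAbove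
  have hle : (-m) * x0 - f x0 ≤ sSup ((fun z => (-m) * z - f z) '' X) :=
    le_csSup hbdd (Set.mem_image_of_mem _ hx0)
  have hC0 : |x0 - b| ≤ C := hCb x0 hx0
  have h2 : (l - m) * (b - x0) ≤ C * |l - m| := by
    calc (l - m) * (b - x0) ≤ |(l - m) * (b - x0)| := le_abs_self _
    _ = |l - m| * |b - x0| := abs_mul _ _
    _ ≤ |l - m| * C := by
        have : |b - x0| ≤ C := by rwa [abs_sub_comm]
        exact mul_le_mul_of_nonneg_left this (abs_nonneg _)
    _ = C * |l - m| := mul_comm _ _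
  unfold qfun
  rw [hsup]
  nlinarith [hle]

lemma qfun_eq_of_min (f : ℝ → ℝ) (X : Set ℝ) (b v x0 : ℝ) (hx0 : x0 ∈ X)
    (hmin : ∀ y ∈ X, f x0 + v * (x0 - b) ≤ f y + v * (y - b)) :
    qfun f X b v = -(f x0 + v * (x0 - b)) := by
  have hsup : sSup ((fun z => (-v) * z - f z) '' X) = (-v) * x0 - f x0 := by
    apply IsGreatest.csSup_eq
    constructor
    · exact Set.mem_image_of_mem _ hx0
    · rintro y ⟨z, hz, rfl⟩
      have := hmin z hz
      simp only
      nlinarith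
  unfold qfun
  rw [hsup]; ring

/-- With `λ*` a dual optimal, `x*` a primal optimal, and `C > 0` a bound
on `|x − bᵢ|` over `x ∈ Xᵢ`, for every iteration `k` the DLM iterates satisfy
`0 ≤ Σᵢ [Lᵢ(xᵢ*, vᵢ(k+1)) − Lᵢ(xᵢ(k+1), vᵢ(k+1))]
   ≤ C Σᵢ |λ* − vᵢ(k+1)| + Σᵢ vᵢ(k+1)(xᵢ* − bᵢ)`,
where `Lᵢ(x, v) = fᵢ(x) + v (x − bᵢ)`. -/
theorem dlm_lagrangian_gap_bound
    {n : ℕ} (hn : 0 < n)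
    (f : Fin n → ℝ → ℝ) (X : Fin n → Set ℝ) (b : Fin n → ℝ)
    (A : Matrix (Fin n) (Fin n) ℝ) (α : ℕ → ℝ)
    (lam x v : ℕ → Fin n → ℝ)
    -- each `f i` is proper, closed and convex (finite-valued convex, hence continuous)
    (hf : ∀ i, ConvexOn ℝ Set.univ (f i))
    (hfc : ∀ i, Continuous (f i))
    -- each `X i` is a nonempty convex compact subset of ℝ
    (hXne : ∀ i, (X i).Nonempty)
    (hXcvx : ∀ i, Convex ℝ (X i))
    (hXcpt : ∀ i, IsCompact (X i))
    -- `A` is doubly stochastic with positive diagonal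
    (hA0 : ∀ i j, 0 ≤ A i j)
    (hArow : ∀ i, ∑ j, A i j = 1)
    (hAcol : ∀ j, ∑ i, A i j = 1)
    (hAdiag : ∀ i, 0 < A i i)
    -- the off-diagonal positivity pattern of `A` is the edge set of a connected
    -- undirected graph `G`
    (G : SimpleGraph (Fin n))
    (hGadj : ∀ i j, G.Adj i j ↔ (i ≠ j ∧ 0 < A i j))
    (hGconn : G.Connected)
    -- positive step sizes
    (hαpos : ∀ k, 0 < α k)
    -- the DLM iteration
    (hv : ∀ (k : ℕ) (i : Fin n), v (k + 1) i = ∑ j, A i j * lam k j)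
    (hxmem : ∀ (k : ℕ) (i : Fin n), x (k + 1) i ∈ X i)
    (hxmin : ∀ (k : ℕ) (i : Fin n), ∀ y ∈ X i,
      f i (x (k + 1) i) + v (k + 1) i * (x (k + 1) i - b i) ≤
        f i y + v (k + 1) i * (y - b i))
    (hlam : ∀ (k : ℕ) (i : Fin n), lam (k + 1) i = v (k + 1) i - α k * (x (k + 1) i - b i))
    -- Slater's condition: a point in the relative interior of `X₁ × … × Xₙ`
    -- whose coordinates sum to `b = Σᵢ bᵢ`
    (hSlater : ∃ xt : Fin n → ℝ,
      xt ∈ intrinsicInterior ℝ (Set.univ.pi X) ∧ ∑ i, xt i = ∑ i, b i)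
    -- `λ*` is a minimizer of the dual function `λ ↦ Σᵢ qᵢ(λ)`
    (lamstar : ℝ)
    (hls : ∀ μ : ℝ, ∑ i, qfun (f i) (X i) (b i) lamstar ≤ ∑ i, qfun (f i) (X i) (b i) μ)
    -- `x*` is an optimal solution of the resource allocation problem
    (xstar : Fin n → ℝ)
    (hxs_mem : ∀ i, xstar i ∈ X i)
    (hxs_sum : ∑ i, xstar i = ∑ i, b i)
    (hxs_opt : ∀ y : Fin n → ℝ, (∀ i, y i ∈ X i) → (∑ i, y i = ∑ i, b i) →
      ∑ i, f i (xstar i) ≤ ∑ i, f i (y i))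
    -- strong duality
    (hsd : ∑ i, f i (xstar i) = -∑ i, qfun (f i) (X i) (b i) lamstar)
    -- `C > 0` bounds `|x − bᵢ|` for all `x ∈ Xᵢ` and all `i`
    (C : ℝ) (hC : 0 < C)
    (hCb : ∀ i : Fin n, ∀ z ∈ X i, |z - b i| ≤ C) :
    ∀ k : ℕ,
      0 ≤ ∑ i, ((f i (xstar i) + v (k + 1) i * (xstar i - b i)) -
            (f i (x (k + 1) i) + v (k + 1) i * (x (k + 1) i - b i))) ∧
      ∑ i, ((f i (xstar i) + v (k + 1) i * (xstar i - b i)) -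
            (f i (x (k + 1) i) + v (k + 1) i * (x (k + 1) i - b i))) ≤
        C * ∑ i, |lamstar - v (k + 1) i| + ∑ i, v (k + 1) i * (xstar i - b i) := by
  intro k
  have hqv : ∀ i, qfun (f i) (X i) (b i) (v (k + 1) i) =
      -(f i (x (k + 1) i) + v (k + 1) i * (x (k + 1) i - b i)) := fun i =>
    qfun_eq_of_min (f i) (X i) (b i) _ _ (hxmem k i) (hxmin k i)
  have hlip : ∀ i, qfun (f i) (X i) (b i) (v (k + 1) i) ≤
      qfun (f i) (X i) (b i) lamstar + C * |lamstar - v (k + 1) i| := by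
    intro i
    have := qfun_lipschitz_le (f i) (hfc i) (X i) (hXne i) (hXcpt i) (b i) C (hCb i)
      (v (k + 1) i) lamstar
    rwa [abs_sub_comm] at this
  have hsum : ∑ i, qfun (f i) (X i) (b i) (v (k + 1) i) ≤
      ∑ i, (qfun (f i) (X i) (b i) lamstar + C * |lamstar - v (k + 1) i|) :=
    Finset.sum_le_sum fun i _ => hlip i
  rw [Finset.sum_add_distrib] at hsum
  have hq_eq : ∑ i, qfun (f i) (X i) (b i) (v (k + 1) i) =
      -∑ i, (f i (x (k + 1) i) + v (k + 1) i * (x (k + 1) i - b i)) := by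
    rw [← Finset.sum_neg_distrib]
    exact Finset.sum_congr rfl fun i _ => hqv i
  have habs : ∑ i, C * |lamstar - v (k + 1) i| = C * ∑ i, |lamstar - v (k + 1) i| := by
    rw [Finset.mul_sum]
  constructor
  · apply Finset.sum_nonneg
    intro i _
    have := hxmin k i (xstar i) (hxs_mem i)
    linarith
  · rw [Finset.sum_sub_distrib, Finset.sum_add_distrib]
    rw [hq_eq, habs] at hsum
    linarith [hsum, hsd]
end

section
/- Suppose the step sizes α(k) are nonincreasing with α(0) = 1, and let C > 0 satisfy |x_i(k+1) − b_i| ≤ C for all i and k. Then for every node i = 1,…,n and every k ≥ 0, the DLM iterates satisfy |λ_i(k) − λ̄(k)| ≤ σ₂^k ‖λ(0)‖₁ + √n C Σ_{t=0}^{k−1} α(t) σ₂^{k−1−t}, where λ̄(k) = (1/n) Σ_{i=1}^n λ_i(k), ‖·‖₁ is the ℓ1 norm on ℝ^n, and σ₂ ∈ (0,1) is the second largest singular value of A. -/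
/-- The ℓ1 norm on `ℝ^n`. -/
def l1norm {n : ℕ} (x : Fin n → ℝ) : ℝ := ∑ i, |x i|

/-- The ℓ2 (Euclidean) norm on `ℝ^n`. -/
noncomputable def l2norm {n : ℕ} (x : Fin n → ℝ) : ℝ := Real.sqrt (∑ i, (x i) ^ 2)

/-- The second largest singular value of a doubly stochastic matrix `A`, characterized
variationally as the maximal gain `‖A x‖₂` of `A` over unit ℓ2-norm vectors `x`
orthogonal to the all-ones vector (for a doubly stochastic matrix the all-ones vector is
a top singular vector with singular value `1`, so this sup is exactly `σ₂`). -/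
noncomputable def sigma2 {n : ℕ} (A : Matrix (Fin n) (Fin n) ℝ) : ℝ :=
  sSup {s : ℝ | ∃ x : Fin n → ℝ, l2norm x = 1 ∧ (∑ i, x i) = 0 ∧ s = l2norm (A.mulVec x)}


lemma l2norm_eq {n : ℕ} (x : Fin n → ℝ) :
    l2norm x = ‖(WithLp.equiv 2 (Fin n → ℝ)).symm x‖ := by
  rw [EuclideanSpace.norm_eq]
  simp [l2norm, Real.norm_eq_abs, sq_abs]

lemma l2norm_nonneg {n : ℕ} (x : Fin n → ℝ) : 0 ≤ l2norm x := Real.sqrt_nonneg _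

lemma l2norm_add_le {n : ℕ} (x y : Fin n → ℝ) :
    l2norm (fun i => x i + y i) ≤ l2norm x + l2norm y := by
  simp only [l2norm_eq]
  exact norm_add_le ((WithLp.equiv 2 (Fin n → ℝ)).symm x) ((WithLp.equiv 2 (Fin n → ℝ)).symm y)

lemma l2norm_smul {n : ℕ} (c : ℝ) (x : Fin n → ℝ) :
    l2norm (fun i => c * x i) = |c| * l2norm x := by
  simp only [l2norm_eq]
  have : (WithLp.equiv 2 (Fin n → ℝ)).symm (fun i => c * x i)
      = c • (WithLp.equiv 2 (Fin n → ℝ)).symm x := rfl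
  rw [this, norm_smul, Real.norm_eq_abs]

lemma abs_le_l2norm {n : ℕ} (x : Fin n → ℝ) (i : Fin n) : |x i| ≤ l2norm x := by
  rw [l2norm, ← Real.sqrt_sq_eq_abs]
  exact Real.sqrt_le_sqrt (Finset.single_le_sum (fun j _ => sq_nonneg (x j)) (Finset.mem_univ i))

lemma l2norm_le_l1norm {n : ℕ} (x : Fin n → ℝ) : l2norm x ≤ l1norm x := by
  rw [l2norm, l1norm]
  have h : ∑ i, x i ^ 2 ≤ (∑ i, |x i|) ^ 2 := by
    calc ∑ i, x i ^ 2 = ∑ i, |x i| * |x i| :=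
          Finset.sum_congr rfl fun i _ => by rw [← sq_abs]; ring
      _ ≤ ∑ i, |x i| * (∑ j, |x j|) := by
          refine Finset.sum_le_sum fun i _ => ?_
          exact mul_le_mul_of_nonneg_left
            (Finset.single_le_sum (fun j _ => abs_nonneg (x j)) (Finset.mem_univ i))
            (abs_nonneg _)
      _ = (∑ i, |x i|) ^ 2 := by rw [← Finset.sum_mul]; ring
  calc Real.sqrt (∑ i, x i ^ 2) ≤ Real.sqrt ((∑ i, |x i|) ^ 2) := Real.sqrt_le_sqrt h
    _ = ∑ i, |x i| := Real.sqrt_sq (Finset.sum_nonneg fun i _ => abs_nonneg _)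

lemma l2norm_le_sqrt_mul {n : ℕ} (x : Fin n → ℝ) (C : ℝ) (hC : 0 ≤ C)
    (h : ∀ i, |x i| ≤ C) : l2norm x ≤ Real.sqrt n * C := by
  rw [l2norm]
  have h1 : ∑ i, x i ^ 2 ≤ (n : ℝ) * C ^ 2 := by
    calc ∑ i, x i ^ 2 ≤ ∑ _i : Fin n, C ^ 2 := by
          refine Finset.sum_le_sum fun i _ => ?_
          rw [← sq_abs]
          exact pow_le_pow_left₀ (abs_nonneg _) (h i) 2
      _ = (n : ℝ) * C ^ 2 := by simp [Finset.sum_const, mul_comm]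
  calc Real.sqrt (∑ i, x i ^ 2) ≤ Real.sqrt ((n : ℝ) * C ^ 2) := Real.sqrt_le_sqrt h1
    _ = Real.sqrt n * C := by
        rw [Real.sqrt_mul (Nat.cast_nonneg n), Real.sqrt_sq hC]

/-- Centering decreases the ℓ2 norm. -/
lemma l2norm_center_le {n : ℕ} (y : Fin n → ℝ) :
    l2norm (fun i => y i - (∑ j, y j) / n) ≤ l2norm y := by
  rcases Nat.eq_zero_or_pos n with h0 | hn
  · subst h0; simp [l2norm]
  set c : ℝ := (∑ j, y j) / n with hc
  have hnne : (n : ℝ) ≠ 0 := by positivity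
  have hsum : ∑ j, y j = (n : ℝ) * c := by rw [hc]; field_simp
  have key : ∑ i, (y i - c) ^ 2 = (∑ i, y i ^ 2) - (n : ℝ) * c ^ 2 := by
    have e1 : ∀ i, (y i - c) ^ 2 = y i ^ 2 - 2 * c * y i + c ^ 2 := fun i => by ring
    simp_rw [e1]
    rw [Finset.sum_add_distrib, Finset.sum_sub_distrib, ← Finset.mul_sum, hsum,
      Finset.sum_const, Finset.card_univ, Fintype.card_fin, nsmul_eq_mul]
    ring
  rw [l2norm, l2norm]
  apply Real.sqrt_le_sqrt
  rw [key]
  nlinarith [sq_nonneg c, Nat.cast_nonneg (α := ℝ) n]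

/-- A doubly stochastic matrix is an ℓ2 contraction. -/
lemma mulVec_l2_le {n : ℕ} (A : Matrix (Fin n) (Fin n) ℝ)
    (hA0 : ∀ i j, 0 ≤ A i j) (hArow : ∀ i, ∑ j, A i j = 1) (hAcol : ∀ j, ∑ i, A i j = 1)
    (x : Fin n → ℝ) : l2norm (A.mulVec x) ≤ l2norm x := by
  rw [l2norm, l2norm]
  apply Real.sqrt_le_sqrt
  have hrow : ∀ i, (A.mulVec x i) ^ 2 ≤ ∑ j, A i j * x j ^ 2 := by
    intro i
    have hcs := Finset.sum_mul_sq_le_sq_mul_sq Finset.univ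
      (fun j => Real.sqrt (A i j)) (fun j => Real.sqrt (A i j) * x j)
    have e1 : ∀ j, Real.sqrt (A i j) * (Real.sqrt (A i j) * x j) = A i j * x j := by
      intro j; rw [← mul_assoc, Real.mul_self_sqrt (hA0 i j)]
    have e2 : ∀ j, Real.sqrt (A i j) ^ 2 = A i j := fun j => Real.sq_sqrt (hA0 i j)
    have e3 : ∀ j, (Real.sqrt (A i j) * x j) ^ 2 = A i j * x j ^ 2 := by
      intro j; rw [mul_pow, e2]
    simp_rw [e1, e2, e3, hArow i, one_mul] at hcs
    simpa [Matrix.mulVec, dotProduct] using hcs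
  calc ∑ i, (A.mulVec x i) ^ 2 ≤ ∑ i, ∑ j, A i j * x j ^ 2 :=
        Finset.sum_le_sum fun i _ => hrow i
    _ = ∑ j, (∑ i, A i j) * x j ^ 2 := by
        rw [Finset.sum_comm]; simp_rw [Finset.sum_mul]
    _ = ∑ j, x j ^ 2 := by simp_rw [hAcol, one_mul]

lemma sigma2_bddAbove {n : ℕ} (A : Matrix (Fin n) (Fin n) ℝ)
    (hA0 : ∀ i j, 0 ≤ A i j) (hArow : ∀ i, ∑ j, A i j = 1) (hAcol : ∀ j, ∑ i, A i j = 1) :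
    BddAbove {s : ℝ | ∃ x : Fin n → ℝ, l2norm x = 1 ∧ (∑ i, x i) = 0 ∧ s = l2norm (A.mulVec x)} := by
  refine ⟨1, fun s hs => ?_⟩
  obtain ⟨x, hx1, _, rfl⟩ := hs
  calc l2norm (A.mulVec x) ≤ l2norm x := mulVec_l2_le A hA0 hArow hAcol x
    _ = 1 := hx1

lemma sigma2_nonneg {n : ℕ} (A : Matrix (Fin n) (Fin n) ℝ)
    (hA0 : ∀ i j, 0 ≤ A i j) (hArow : ∀ i, ∑ j, A i j = 1) (hAcol : ∀ j, ∑ i, A i j = 1) :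
    0 ≤ sigma2 A := by
  set S := {s : ℝ | ∃ x : Fin n → ℝ, l2norm x = 1 ∧ (∑ i, x i) = 0 ∧ s = l2norm (A.mulVec x)}
  by_cases hS : S.Nonempty
  · obtain ⟨s, hs⟩ := hS
    have h1 : s ≤ sigma2 A := le_csSup (sigma2_bddAbove A hA0 hArow hAcol) hs
    obtain ⟨x, _, _, rfl⟩ := hs
    exact le_trans (l2norm_nonneg _) h1
  · rw [Set.not_nonempty_iff_eq_empty] at hS
    rw [sigma2]
    rw [show {s : ℝ | ∃ x : Fin n → ℝ, l2norm x = 1 ∧ (∑ i, x i) = 0 ∧ s = l2norm (A.mulVec x)} = S from rfl, hS, Real.sSup_empty]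

lemma mulVec_le_sigma2 {n : ℕ} (A : Matrix (Fin n) (Fin n) ℝ)
    (hA0 : ∀ i j, 0 ≤ A i j) (hArow : ∀ i, ∑ j, A i j = 1) (hAcol : ∀ j, ∑ i, A i j = 1)
    (x : Fin n → ℝ) (hx : ∑ i, x i = 0) :
    l2norm (A.mulVec x) ≤ sigma2 A * l2norm x := by
  by_cases hx0 : l2norm x = 0
  · have hxx : x = 0 := by
      funext i
      have h1 : ∑ j, x j ^ 2 = 0 :=
        le_antisymm (Real.sqrt_eq_zero'.mp hx0)
          (Finset.sum_nonneg fun j _ => sq_nonneg _)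
      have := (Finset.sum_eq_zero_iff_of_nonneg (fun j _ => sq_nonneg (x j))).mp h1 i
        (Finset.mem_univ i)
      exact pow_eq_zero_iff (by norm_num) |>.mp this
    rw [hxx, Matrix.mulVec_zero]
    simp [l2norm]
  · have hc : 0 < l2norm x := lt_of_le_of_ne (l2norm_nonneg x) (Ne.symm hx0)
    set c := l2norm x with hcdef
    set z : Fin n → ℝ := fun i => c⁻¹ * x i with hz
    have hz1 : l2norm z = 1 := by
      rw [hz, l2norm_smul, abs_of_pos (inv_pos.mpr hc), inv_mul_cancel₀ (ne_of_gt hc)]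
    have hzsum : ∑ i, z i = 0 := by
      simp [hz, ← Finset.mul_sum, hx]
    have hmv : A.mulVec z = fun i => c⁻¹ * A.mulVec x i := by
      funext i
      simp only [hz, Matrix.mulVec, dotProduct, Finset.mul_sum]
      exact Finset.sum_congr rfl fun j _ => by ring
    have hmem : l2norm (A.mulVec z) ∈
        {s : ℝ | ∃ y : Fin n → ℝ, l2norm y = 1 ∧ (∑ i, y i) = 0 ∧ s = l2norm (A.mulVec y)} :=
      ⟨z, hz1, hzsum, rfl⟩
    have hle : l2norm (A.mulVec z) ≤ sigma2 A :=
      le_csSup (sigma2_bddAbove A hA0 hArow hAcol) hmem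
    have heq : l2norm (A.mulVec z) = c⁻¹ * l2norm (A.mulVec x) := by
      rw [hmv, l2norm_smul, abs_of_pos (inv_pos.mpr hc)]
    rw [heq] at hle
    calc l2norm (A.mulVec x) = c * (c⁻¹ * l2norm (A.mulVec x)) := by
          field_simp
      _ ≤ c * sigma2 A := mul_le_mul_of_nonneg_left hle (le_of_lt hc)
      _ = sigma2 A * c := mul_comm _ _

/-- With nonincreasing step sizes, `α 0 = 1`, and `C > 0` bounding
`|xᵢ(k+1) − bᵢ|`, the DLM iterates satisfy, for all `i` and `k`,
`|λᵢ(k) − λ̄(k)| ≤ σ₂ᵏ ‖λ(0)‖₁ + √n C Σ_{t=0}^{k−1} α(t) σ₂^{k−1−t}`. -/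
theorem dlm_consensus_bound
    {n : ℕ} (hn : 0 < n)
    (f : Fin n → ℝ → ℝ) (X : Fin n → Set ℝ) (b : Fin n → ℝ)
    (A : Matrix (Fin n) (Fin n) ℝ) (α : ℕ → ℝ)
    (lam x v : ℕ → Fin n → ℝ)
    -- each `f i` is proper, closed and convex (finite-valued convex, hence continuous)
    (hf : ∀ i, ConvexOn ℝ Set.univ (f i))
    (hfc : ∀ i, Continuous (f i))
    -- each `X i` is a nonempty convex compact subset of ℝ
    (hXne : ∀ i, (X i).Nonempty)
    (hXcvx : ∀ i, Convex ℝ (X i))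
    (hXcpt : ∀ i, IsCompact (X i))
    -- `A` is doubly stochastic with positive diagonal
    (hA0 : ∀ i j, 0 ≤ A i j)
    (hArow : ∀ i, ∑ j, A i j = 1)
    (hAcol : ∀ j, ∑ i, A i j = 1)
    (hAdiag : ∀ i, 0 < A i i)
    -- the off-diagonal positivity pattern of `A` is the edge set of a connected
    -- undirected graph `G`
    (G : SimpleGraph (Fin n))
    (hGadj : ∀ i j, G.Adj i j ↔ (i ≠ j ∧ 0 < A i j))
    (hGconn : G.Connected)
    -- positive step sizes
    (hαpos : ∀ k, 0 < α k)
    -- the DLM iteration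
    (hv : ∀ (k : ℕ) (i : Fin n), v (k + 1) i = ∑ j, A i j * lam k j)
    (hxmem : ∀ (k : ℕ) (i : Fin n), x (k + 1) i ∈ X i)
    (hxmin : ∀ (k : ℕ) (i : Fin n), ∀ y ∈ X i,
      f i (x (k + 1) i) + v (k + 1) i * (x (k + 1) i - b i) ≤
        f i y + v (k + 1) i * (y - b i))
    (hlam : ∀ (k : ℕ) (i : Fin n), lam (k + 1) i = v (k + 1) i - α k * (x (k + 1) i - b i))
    (hα1 : α 0 = 1)
    (hαmono : ∀ k, α (k + 1) ≤ α k)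
    -- `C > 0` bounds `|xᵢ(k+1) − bᵢ|` for all `i` and `k`
    (C : ℝ) (hC : 0 < C)
    (hCb : ∀ (k : ℕ) (i : Fin n), |x (k + 1) i - b i| ≤ C) :
    ∀ (i : Fin n) (k : ℕ),
      |lam k i - (∑ j, lam k j) / n| ≤
        (sigma2 A) ^ k * l1norm (lam 0) +
          Real.sqrt n * C * ∑ t ∈ Finset.range k, α t * (sigma2 A) ^ (k - 1 - t) := by

  have hnne : (n : ℝ) ≠ 0 := by positivity
  have hσ0 : 0 ≤ sigma2 A := sigma2_nonneg A hA0 hArow hAcol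
  set σ := sigma2 A with hσ
  have hsum0 : ∀ k, ∑ j, (lam k j - (∑ m, lam k m) / n) = 0 := by
    intro k
    rw [Finset.sum_sub_distrib, Finset.sum_const, Finset.card_univ, Fintype.card_fin,
      nsmul_eq_mul]
    field_simp
    ring
  have hstep : ∀ (k : ℕ) (j : Fin n),
      lam (k + 1) j = (∑ m, A j m * lam k m) - α k * (x (k + 1) j - b j) := by
    intro k j; rw [hlam k j, hv k j]
  have hAsum : ∀ k, ∑ j, ∑ m, A j m * lam k m = ∑ m, lam k m := by
    intro k
    rw [Finset.sum_comm]
    exact Finset.sum_congr rfl fun m _ => by rw [← Finset.sum_mul, hAcol m, one_mul]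
  have hsum' : ∀ k, ∑ j, lam (k + 1) j
      = (∑ j, lam k j) - α k * ∑ j, (x (k + 1) j - b j) := by
    intro k
    calc ∑ j, lam (k + 1) j
        = ∑ j, ((∑ m, A j m * lam k m) - α k * (x (k + 1) j - b j)) :=
          Finset.sum_congr rfl fun j _ => hstep k j
      _ = (∑ j, ∑ m, A j m * lam k m) - ∑ j, α k * (x (k + 1) j - b j) :=
          Finset.sum_sub_distrib _ _
      _ = (∑ j, lam k j) - α k * ∑ j, (x (k + 1) j - b j) := by
          rw [hAsum k, Finset.mul_sum]
  have hdec : ∀ k, (fun j => lam (k + 1) j - (∑ m, lam (k + 1) m) / n) =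
      fun j => (A.mulVec (fun m => lam k m - (∑ m', lam k m') / n)) j +
        (-(α k)) * ((x (k + 1) j - b j) - (∑ m, (x (k + 1) m - b m)) / n) := by
    intro k
    funext j
    have hm : A.mulVec (fun m => lam k m - (∑ m', lam k m') / n) j
        = (∑ m, A j m * lam k m) - (∑ m', lam k m') / n := by
      simp only [Matrix.mulVec, dotProduct]
      simp_rw [mul_sub]
      rw [Finset.sum_sub_distrib, ← Finset.sum_mul, hArow j, one_mul]
    rw [hm, hstep k j, hsum' k]
    field_simp
    ring
  have key : ∀ k, l2norm (fun j => lam k j - (∑ m, lam k m) / n) ≤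
      σ ^ k * l1norm (lam 0) +
        Real.sqrt n * C * ∑ t ∈ Finset.range k, α t * σ ^ (k - 1 - t) := by
    intro k
    induction k with
    | zero =>
        simp only [pow_zero, one_mul, Finset.range_zero, Finset.sum_empty, mul_zero, add_zero]
        exact le_trans (l2norm_center_le (lam 0)) (l2norm_le_l1norm (lam 0))
    | succ k ih =>
        have hB : (0 : ℝ) ≤ Real.sqrt n * C := mul_nonneg (Real.sqrt_nonneg n) hC.le
        have h1 : l2norm (fun j => lam (k + 1) j - (∑ m, lam (k + 1) m) / n) ≤
            σ * l2norm (fun j => lam k j - (∑ m, lam k m) / n) +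
              α k * (Real.sqrt n * C) := by
          rw [hdec k]
          refine le_trans (l2norm_add_le _ _) (add_le_add ?_ ?_)
          · exact mulVec_le_sigma2 A hA0 hArow hAcol _ (hsum0 k)
          · rw [l2norm_smul, abs_neg, abs_of_pos (hαpos k)]
            refine mul_le_mul_of_nonneg_left ?_ (le_of_lt (hαpos k))
            exact le_trans (l2norm_center_le (fun m => x (k + 1) m - b m))
              (l2norm_le_sqrt_mul _ C hC.le (fun m => hCb k m))
        have hsplit : ∑ t ∈ Finset.range (k + 1), α t * σ ^ (k + 1 - 1 - t)
            = σ * ∑ t ∈ Finset.range k, α t * σ ^ (k - 1 - t) + α k := by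
          rw [Finset.sum_range_succ]
          simp only [Nat.add_sub_cancel]
          rw [Finset.mul_sum]
          congr 1
          · refine Finset.sum_congr rfl fun t ht => ?_
            have htk := Finset.mem_range.mp ht
            have he : k - t = (k - 1 - t) + 1 := by omega
            rw [he, pow_succ]; ring
          · rw [Nat.sub_self, pow_zero, mul_one]
        calc l2norm (fun j => lam (k + 1) j - (∑ m, lam (k + 1) m) / n)
            ≤ σ * l2norm (fun j => lam k j - (∑ m, lam k m) / n) +
                α k * (Real.sqrt n * C) := h1
          _ ≤ σ * (σ ^ k * l1norm (lam 0) +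
                Real.sqrt n * C * ∑ t ∈ Finset.range k, α t * σ ^ (k - 1 - t)) +
                α k * (Real.sqrt n * C) :=
              add_le_add_left (mul_le_mul_of_nonneg_left ih hσ0) _
          _ = σ ^ (k + 1) * l1norm (lam 0) + Real.sqrt n * C *
                (σ * (∑ t ∈ Finset.range k, α t * σ ^ (k - 1 - t)) + α k) := by
              rw [pow_succ]; ring
          _ = σ ^ (k + 1) * l1norm (lam 0) + Real.sqrt n * C *
                ∑ t ∈ Finset.range (k + 1), α t * σ ^ (k + 1 - 1 - t) := by
              rw [hsplit]
  intro i k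
  exact le_trans (abs_le_l2norm (fun j => lam k j - (∑ m, lam k m) / n) i) (key k)
end
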